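/- arXiv:2603.03516 — 8 statements merged into one kernel-verified Lean document; each statement's English description precedes it below -/
import Mathlib

section
/- Let f : ℝⁿ → ℝ and q* ∈ ℝ be such that T_{q*}(f) is lower semicontinuous and T_r(f) is convex for every r > q*. Then T_{q*}(f) is convex. -/
/-- If `T_{q*}(f)` is lower semicontinuous and `T_r(f)` is convex for every
`r > q*`, then `T_{q*}(f)` is convex. -/
theorem stmt_6 (n : ℕ) (f : EuclideanSpace ℝ (Fin n) → ℝ) (qstar : ℝ)
    (hlsc : LowerSemicontinuous (fun x => max qstar (f x)))
    (hconv : ∀ r : ℝ, qstar < r → ConvexOn ℝ Set.univ (fun x => max r (f x))) :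
    ConvexOn ℝ Set.univ (fun x => max qstar (f x)) := by
  refine ⟨convex_univ, ?_⟩
  intro x _ y _ a b ha hb hab
  refine le_of_forall_pos_le_add ?_
  intro ε hε
  have hr : qstar < qstar + ε := by linarith
  have h1 := (hconv _ hr).2 (Set.mem_univ x) (Set.mem_univ y) ha hb hab
  have hle : ∀ t : ℝ, max qstar t ≤ max (qstar + ε) t := fun t =>
    max_le_max (by linarith) le_rfl
  have hge : ∀ t : ℝ, max (qstar + ε) t ≤ max qstar t + ε := fun t => by
    rcases le_total t (qstar + ε) with h | h
    · simp only [max_eq_left h]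
      have := le_max_left qstar t
      linarith
    · have h2 : qstar ≤ t := by linarith
      rw [max_eq_right h2, max_eq_right h]
      linarith
  calc max qstar (f (a • x + b • y)) ≤ max (qstar + ε) (f (a • x + b • y)) := hle _
    _ ≤ a * max (qstar + ε) (f x) + b * max (qstar + ε) (f y) := h1
    _ ≤ a * (max qstar (f x) + ε) + b * (max qstar (f y) + ε) := by
        gcongr <;> exact hge _
    _ = a * max qstar (f x) + b * max qstar (f y) + ε := by linear_combination ε * hab
end

section
/- Let f : ℝⁿ → ℝ be C¹-smooth and q ∈ ℝ be such that T_q(f) = max{q, f} is convex. Then for every x with f(x) = q, the subdifferential of T_q(f) at x equals {t·∇f(x) : t ∈ [0, 1]}. -/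
/-!
Write `g = max q f` and `w = ∇f x`. Since `g ≥ q = g x`, the point `x` minimises `g`, so
`0 ∈ ∂g(x)`; and convexity of `g` bounds the difference quotients of `f` at `x` in every direction
by `g y - q`, so `w ∈ ∂g(x)`. The subdifferential is convex, hence contains the segment `[0, w]`.
Conversely, dividing the subgradient inequality at `x + s d` by `s` and letting `s → 0⁺` shows that
every `v ∈ ∂g(x)` satisfies `⟪d, v⟫ ≤ max 0 ⟪w, d⟫` for all `d`. Testing with `d ⊥ w` puts `v` on
the line through `w`, and testing with `d = ± w` puts it on the segment `[0, w]`.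
-/

open RealInnerProductSpace Filter Set Topology

section Subdifferential

variable {E : Type*} [NormedAddCommGroup E] [InnerProductSpace ℝ E]

def subdifferential (g : E → ℝ) (x : E) : Set E :=
  {v | ∀ y, g x + ⟪y - x, v⟫ ≤ g y}

theorem convex_subdifferential (g : E → ℝ) (x : E) : Convex ℝ (subdifferential g x) := by
  intro v₁ hv₁ v₂ hv₂ a b ha hb hab y
  have h₁ := mul_le_mul_of_nonneg_left (hv₁ y) ha
  have h₂ := mul_le_mul_of_nonneg_left (hv₂ y) hb
  rw [inner_add_right, inner_smul_right, inner_smul_right]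
  linear_combination h₁ + h₂ + (g y - g x) * hab

theorem zero_mem_subdifferential_iff {g : E → ℝ} {x : E} :
    (0 : E) ∈ subdifferential g x ↔ ∀ y, g x ≤ g y := by
  simp [subdifferential]

theorem exists_mem_Icc_smul_eq_of_inner_le_max_zero {v w : E} (h : ∀ d, ⟪d, v⟫ ≤ max 0 ⟪w, d⟫) :
    ∃ t ∈ Icc (0 : ℝ) 1, t • w = v := by
  have hv : v ∈ (ℝ ∙ w) := by
    rw [← Submodule.orthogonal_orthogonal (ℝ ∙ w)]
    intro u hu
    rw [Submodule.mem_orthogonal_singleton_iff_inner_right] at hu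
    have h₁ := h u
    have h₂ := h (-u)
    rw [hu, max_self] at h₁
    rw [inner_neg_right, hu, neg_zero, max_self, inner_neg_left] at h₂
    linarith
  obtain ⟨t, rfl⟩ := Submodule.mem_span_singleton.1 hv
  rcases eq_or_ne w 0 with rfl | hw
  · exact ⟨0, ⟨le_rfl, zero_le_one⟩, by simp⟩
  have hww : 0 < ⟪w, w⟫ := real_inner_self_pos.2 hw
  have hpos := h (-w)
  have hone := h w
  rw [inner_neg_left, inner_neg_right, inner_smul_right,
    max_eq_left (neg_nonpos.2 hww.le)] at hpos
  rw [inner_smul_right, max_eq_right hww.le] at hone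
  exact ⟨t, ⟨by nlinarith, by nlinarith⟩, rfl⟩

variable [CompleteSpace E] {f : E → ℝ} {q : ℝ} {w x : E}

theorem HasGradientAt.tendsto_slope_zero_right (hf : HasGradientAt f w x) (d : E) :
    Tendsto (fun t : ℝ => t⁻¹ * (f (x + t • d) - f x)) (𝓝[>] 0) (𝓝 ⟪w, d⟫) :=
  (hf.hasFDerivAt.hasLineDerivAt d).tendsto_slope_zero_right

theorem gradient_mem_subdifferential_max (hconv : ConvexOn ℝ univ (fun y => max q (f y)))
    (hf : HasGradientAt f w x) (hx : f x = q) :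
    w ∈ subdifferential (fun y => max q (f y)) x := by
  intro y
  suffices h : ⟪w, y - x⟫ ≤ max q (f y) - q by
    dsimp only
    rw [hx, max_self, real_inner_comm]; linarith
  refine le_of_tendsto (hf.tendsto_slope_zero_right (y - x)) ?_
  filter_upwards [Ioo_mem_nhdsGT zero_lt_one] with t ⟨ht₀, ht₁⟩
  have hseg : (1 - t) • x + t • y = x + t • (y - x) := by
    rw [smul_sub, sub_smul, one_smul]; abel
  have hcvx := hconv.2 (mem_univ x) (mem_univ y) (sub_nonneg.2 ht₁.le) ht₀.le (by ring)
  simp only [hseg, hx, max_self, smul_eq_mul] at hcvx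
  have hle : f (x + t • (y - x)) - q ≤ t * (max q (f y) - q) := by
    linarith [le_max_right q (f (x + t • (y - x)))]
  rwa [hx, inv_mul_le_iff₀ ht₀]

theorem inner_le_max_zero_of_mem_subdifferential_max (hf : HasGradientAt f w x) (hx : f x = q)
    {v : E} (hv : v ∈ subdifferential (fun y => max q (f y)) x) (d : E) :
    ⟪d, v⟫ ≤ max 0 ⟪w, d⟫ := by
  have hlim := ((continuous_const.max continuous_id : Continuous fun s : ℝ => max 0 s).tendsto
    ⟪w, d⟫).comp (hf.tendsto_slope_zero_right d)
  refine ge_of_tendsto hlim ?_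
  filter_upwards [self_mem_nhdsWithin] with t (ht : 0 < t)
  have hsub := hv (x + t • d)
  dsimp only at hsub
  rw [add_sub_cancel_left, inner_smul_left, hx, max_self, RCLike.conj_to_real] at hsub
  have hle : t * ⟪d, v⟫ ≤ max 0 (f (x + t • d) - q) := by
    rw [← sub_self q, max_sub_sub_right]; linarith
  calc ⟪d, v⟫ = t⁻¹ * (t * ⟪d, v⟫) := by field_simp
    _ ≤ t⁻¹ * max 0 (f (x + t • d) - q) := by gcongr
    _ = max 0 (t⁻¹ * (f (x + t • d) - f x)) := by
      rw [mul_max_of_nonneg _ _ (inv_nonneg.2 ht.le), mul_zero, hx]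

end Subdifferential

/-- If `f` is `C¹` and `T_q(f) = max {q, f}` is convex, then at every `x` with
`f x = q` the subdifferential of `T_q(f)` at `x` equals
`{t • ∇f x : t ∈ [0, 1]}`. -/
theorem stmt_8 (n : ℕ) (f : EuclideanSpace ℝ (Fin n) → ℝ) (q : ℝ)
    (hf : ContDiff ℝ 1 f)
    (hconv : ConvexOn ℝ Set.univ (fun x => max q (f x))) :
    ∀ x, f x = q →
      {v : EuclideanSpace ℝ (Fin n) |
        ∀ y, max q (f x) + ⟪y - x, v⟫ ≤ max q (f y)} =
        (fun t : ℝ => t • gradient f x) '' Set.Icc (0 : ℝ) 1 := by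
  intro x hx
  have hgrad : HasGradientAt f (gradient f x) x :=
    (hf.differentiable one_ne_zero x).hasGradientAt
  change subdifferential (fun y => max q (f y)) x = _
  refine Subset.antisymm ?_ ?_
  · intro v hv
    exact exists_mem_Icc_smul_eq_of_inner_le_max_zero
      (inner_le_max_zero_of_mem_subdifferential_max hgrad hx hv)
  · have hmin : (0 : EuclideanSpace ℝ (Fin n)) ∈ subdifferential (fun y => max q (f y)) x :=
      zero_mem_subdifferential_iff.2 fun y => by simp [hx]
    have hseg := (convex_subdifferential _ x).segment_subset hmin
      (gradient_mem_subdifferential_max hconv hgrad hx)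
    simpa only [segment_eq_image', zero_add, sub_zero] using hseg
end

section
/- Let f : ℝⁿ → ℝ be C²-smooth such that all sublevel sets f⁻¹((-∞, r]) with r ≥ q are convex (for some fixed q), and suppose the Hessian H_f(x) is positive definite at every x with f(x) > q. Then the truncation T_q(f) = max{q, f} is convex. -/
/-!
Restricted to a line, `max q ∘ f` lies below each of its chords: otherwise the excess over the
chord would attain a positive interior maximum, at a point where `f > q`; there `f` minus the
chord has a local maximum although its second derivative, the Hessian of `f` in the direction
of the line, is positive.
-/

open Set Filter Topology AffineMap

theorem not_isLocalMax_of_deriv_deriv_pos {w : ℝ → ℝ} {t : ℝ} (hw : 0 < deriv (deriv w) t)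
    (hc : ContinuousAt w t) : ¬IsLocalMax w t := by
  intro hmax
  have hmin : IsLocalMin w t := isLocalMin_of_deriv_deriv_pos hw hmax.deriv_eq_zero hc
  have hconst : w =ᶠ[𝓝 t] fun _ => w t :=
    (hmax.and hmin).mono fun _ hs => le_antisymm hs.1 hs.2
  have : deriv (deriv w) t = 0 := by
    rw [hconst.deriv.deriv_eq]
    simp
  exact hw.ne' this

theorem nonpos_on_Icc_of_not_isLocalMax {φ : ℝ → ℝ} {a b : ℝ}
    (hφ : ContinuousOn φ (Icc a b)) (ha : φ a ≤ 0) (hb : φ b ≤ 0)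
    (hmax : ∀ t ∈ Ioo a b, 0 < φ t → ¬IsLocalMax φ t) :
    ∀ s ∈ Icc a b, φ s ≤ 0 := by
  intro s hs
  by_contra! hpos
  obtain ⟨t, ht, hts⟩ := isCompact_Icc.exists_isMaxOn ⟨s, hs⟩ hφ
  have hφt : 0 < φ t := hpos.trans_le (hts hs)
  have ht' : t ∈ Ioo a b :=
    ⟨ht.1.lt_of_ne (by rintro rfl; linarith), ht.2.lt_of_ne (by rintro rfl; linarith)⟩
  exact hmax t ht' hφt (hts.isLocalMax (Icc_mem_nhds ht'.1 ht'.2))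

theorem max_le_lineMap_of_deriv_deriv_pos {h : ℝ → ℝ} {q : ℝ} (hh : ContDiff ℝ 2 h)
    (hpos : ∀ s, q < h s → 0 < deriv (deriv h) s) {s : ℝ} (hs : s ∈ Icc (0 : ℝ) 1) :
    max q (h s) ≤ lineMap (max q (h 0)) (max q (h 1)) s := by
  set ψ : ℝ → ℝ := fun s => max q (h s)
  set L : ℝ → ℝ := ⇑(lineMap (k := ℝ) (ψ 0) (ψ 1))
  have hhd : Differentiable ℝ h := hh.differentiable two_ne_zero
  have hLc : Continuous L := (contDiff_lineMap (n := 0) _ _).continuous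
  suffices ∀ s ∈ Icc (0 : ℝ) 1, ψ s - L s ≤ 0 from sub_nonpos.mp (this s hs)
  refine nonpos_on_Icc_of_not_isLocalMax
    ((continuous_const.max hh.continuous).sub hLc).continuousOn (by simp [L]) (by simp [L]) ?_
  intro t ht hφt hmax
  have hLq : q ≤ L t :=
    (convex_Ici q).lineMap_mem (mem_Ici.mpr (le_max_left _ _)) (mem_Ici.mpr (le_max_left _ _))
      (Ioo_subset_Icc_self ht)
  have hqt : q < h t := by
    by_contra! hle
    simp only [ψ, max_eq_left hle] at hφt
    linarith
  have hloc : IsLocalMax (fun s => h s - L s) t :=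
    hmax.mono fun s hs => by
      simp only [ψ, max_eq_right hqt.le] at hs
      linarith [le_max_right q (h s)]
  have hderiv : deriv (fun s => h s - L s) = fun s => deriv h s - (ψ 1 - ψ 0) :=
    funext fun s => ((hhd s).hasDerivAt.sub hasDerivAt_lineMap).deriv
  refine not_isLocalMax_of_deriv_deriv_pos (w := fun s => h s - L s) ?_
    (hhd.continuous.sub hLc).continuousAt hloc
  rw [hderiv, deriv_sub_const]
  exact hpos t hqt

theorem deriv_deriv_comp_lineMap {E F : Type*} [NormedAddCommGroup E] [NormedSpace ℝ E]
    [NormedAddCommGroup F] [NormedSpace ℝ F] {f : E → F} (hf : ContDiff ℝ 2 f) (x y : E)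
    (s : ℝ) : deriv (deriv (f ∘ lineMap x y)) s =
      fderiv ℝ (fderiv ℝ f) (lineMap x y s) (y - x) (y - x) := by
  have hd : Differentiable ℝ f := hf.differentiable two_ne_zero
  have hd' : Differentiable ℝ (fderiv ℝ f) :=
    (hf.fderiv_right (m := 1) (by norm_num)).differentiable one_ne_zero
  have hderiv : deriv (f ∘ lineMap x y) = fun s => fderiv ℝ f (lineMap x y s) (y - x) :=
    funext fun s => ((hd _).hasFDerivAt.comp_hasDerivAt s hasDerivAt_lineMap).deriv
  rw [hderiv]
  exact (((hd' _).hasFDerivAt.comp_hasDerivAt s hasDerivAt_lineMap).clm_apply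
    (hasDerivAt_const s (y - x))).deriv.trans (by simp)

theorem convexOn_univ_of_lineMap_le {E : Type*} [AddCommGroup E] [Module ℝ E] {F : E → ℝ}
    (hF : ∀ x y : E, x ≠ y → ∀ t ∈ Icc (0 : ℝ) 1,
      F (lineMap x y t) ≤ lineMap (F x) (F y) t) :
    ConvexOn ℝ univ F := by
  refine ⟨convex_univ, fun x _ y _ a b _ hb hab => ?_⟩
  obtain rfl : a = 1 - b := eq_sub_of_add_eq hab
  by_cases hxy : x = y
  · subst hxy
    simp only [← add_smul, sub_add_cancel, one_smul, smul_eq_mul, ← add_mul, one_mul, le_refl]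
  · simpa [lineMap_apply_module] using hF x y hxy b ⟨hb, by linarith⟩

theorem stmt_9_general (n : ℕ) (f : EuclideanSpace ℝ (Fin n) → ℝ) (q : ℝ)
    (hf : ContDiff ℝ 2 f)
    (hhess : ∀ x, q < f x → ∀ v : EuclideanSpace ℝ (Fin n), v ≠ 0 →
      0 < fderiv ℝ (fderiv ℝ f) x v v) :
    ConvexOn ℝ Set.univ (fun x => max q (f x)) := by
  refine convexOn_univ_of_lineMap_le fun x y hxy t ht => ?_
  have hpos : ∀ s, q < (f ∘ lineMap x y) s → 0 < deriv (deriv (f ∘ lineMap x y)) s :=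
    fun s hs => deriv_deriv_comp_lineMap hf x y s ▸ hhess _ hs _ (sub_ne_zero.mpr hxy.symm)
  simpa using max_le_lineMap_of_deriv_deriv_pos (hf.comp (contDiff_lineMap x y)) hpos ht

/-- If `f : ℝⁿ → ℝ` is `C²`, all sublevel sets `f⁻¹((-∞, r])` with `r ≥ q` are
convex, and the Hessian of `f` is positive definite at every point `x` with
`f x > q`, then the truncation `T_q(f) = max {q, f}` is convex. -/
theorem stmt_9 (n : ℕ) (f : EuclideanSpace ℝ (Fin n) → ℝ) (q : ℝ)
    (hf : ContDiff ℝ 2 f)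
    (hsub : ∀ r : ℝ, q ≤ r → Convex ℝ {x | f x ≤ r})
    (hhess : ∀ x, q < f x → ∀ v : EuclideanSpace ℝ (Fin n), v ≠ 0 →
      0 < fderiv ℝ (fderiv ℝ f) x v v) :
    ConvexOn ℝ Set.univ (fun x => max q (f x)) :=
  stmt_9_general n f q hf hhess
end

section
/- Let F : D → ℝⁿ be C¹ on an open convex set D ⊆ ℝⁿ such that ⟨dF_x(y), y⟩ > 0 for all x ∈ D and all nonzero y ∈ ℝⁿ. Then F is injective on D. -/
open RealInnerProductSpace Set

/- Along the segment from `a` to `b`, `t ↦ ⟪b - a, F (a + t • (b - a))⟫` has derivative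
`⟪b - a, dF (b - a)⟫ > 0`, so by the mean value theorem `⟪b - a, F b - F a⟫ > 0`; in particular
`F b ≠ F a`. -/

variable {E : Type*} [NormedAddCommGroup E] [InnerProductSpace ℝ E]

theorem Convex.inner_sub_sub_pos_of_hasFDerivAt {F : E → E} {F' : E → E →L[ℝ] E} {D : Set E}
    (hDconv : Convex ℝ D) (hF : ∀ x ∈ D, HasFDerivAt F (F' x) x)
    (hpos : ∀ x ∈ D, ∀ v : E, v ≠ 0 → 0 < ⟪F' x v, v⟫)
    {a b : E} (ha : a ∈ D) (hb : b ∈ D) (hab : a ≠ b) :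
    0 < ⟪b - a, F b - F a⟫ := by
  set v := b - a
  have hseg : ∀ t ∈ Icc (0 : ℝ) 1, a + t • v ∈ D := fun t ht => hDconv.add_smul_sub_mem ha hb ht
  have hderiv : ∀ t ∈ Icc (0 : ℝ) 1,
      HasDerivAt (fun s : ℝ => ⟪v, F (a + s • v)⟫) ⟪v, F' (a + t • v) v⟫ t := by
    intro t ht
    have hline : HasDerivAt (fun s : ℝ => a + s • v) v t := by
      simpa using ((hasDerivAt_id t).smul_const v).const_add a
    exact (innerSL ℝ v).hasFDerivAt.comp_hasDerivAt t
      ((hF _ (hseg t ht)).comp_hasDerivAt t hline)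
  obtain ⟨c, hc, hslope⟩ := exists_hasDerivAt_eq_slope _ _ zero_lt_one
    (fun t ht => (hderiv t ht).continuousAt.continuousWithinAt)
    (fun t ht => hderiv t (Ioo_subset_Icc_self ht))
  have hmean : ⟪v, F b - F a⟫ = ⟪v, F' (a + c • v) v⟫ := by
    rw [hslope, inner_sub_right]
    simp [v]
  rw [hmean, real_inner_comm]
  exact hpos _ (hseg c (Ioo_subset_Icc_self hc)) v (sub_ne_zero.mpr hab.symm)

theorem Convex.injOn_of_hasFDerivAt {F : E → E} {F' : E → E →L[ℝ] E} {D : Set E}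
    (hDconv : Convex ℝ D) (hF : ∀ x ∈ D, HasFDerivAt F (F' x) x)
    (hpos : ∀ x ∈ D, ∀ v : E, v ≠ 0 → 0 < ⟪F' x v, v⟫) :
    InjOn F D := by
  intro a ha b hb hFab
  by_contra hab
  simpa [hFab] using hDconv.inner_sub_sub_pos_of_hasFDerivAt hF hpos ha hb hab

/-- Gale–Nikaidô criterion: a `C¹` map `F` on an open convex set `D ⊆ ℝⁿ`
whose differential is positive definite at every point of `D` is injective
on `D`. -/
theorem stmt_11 (n : ℕ) (F : EuclideanSpace ℝ (Fin n) → EuclideanSpace ℝ (Fin n))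
    (D : Set (EuclideanSpace ℝ (Fin n))) (hD : IsOpen D) (hDconv : Convex ℝ D)
    (hF : ContDiffOn ℝ 1 F D)
    (hpos : ∀ x ∈ D, ∀ v : EuclideanSpace ℝ (Fin n), v ≠ 0 →
      0 < ⟪fderiv ℝ F x v, v⟫) :
    Set.InjOn F D :=
  hDconv.injOn_of_hasFDerivAt
    (fun x hx => ((hF.differentiableOn one_ne_zero x hx).differentiableAt
      (hD.mem_nhds hx)).hasFDerivAt) hpos
end

section
/- Let f : ℝⁿ → ℝ be C¹-smooth and q ∈ ℝ be such that T_q(f) = max{q, f} is convex. Then ∇f restricted to f⁻¹([q, +∞)) is monotone: ⟨∇f(x₁) - ∇f(x₂), x₁ - x₂⟩ ≥ 0 for all x₁, x₂ with f(x₁), f(x₂) ≥ q. Moreover ⟨∇f(x), x - y⟩ ≥ 0 whenever f(x) ≥ q and f(y) < q. -/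
/-!
If `f x ≥ q`, then `f ≤ max q f` with equality at `x`, so the differentiable minorant `f`
touches the convex function `max q f` at `x`, and `∇f x` is a subgradient of `max q f` there
(compare slopes along the segment from `x` to `y`). Adding the subgradient inequalities at two
such points gives monotonicity; at a point `y` with `f y < q` the function `max q f` equals
its minimum `q`, which gives the second claim.
-/

open RealInnerProductSpace Set Filter

theorem HasDerivAt.le_sub_of_convexOn_majorant {φ ψ : ℝ → ℝ} {φ' : ℝ} (hφ : HasDerivAt φ φ' 0)
    (hψ : ConvexOn ℝ (Icc 0 1) ψ) (hle : ∀ t ∈ Icc (0 : ℝ) 1, φ t ≤ ψ t) (h0 : φ 0 = ψ 0) :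
    φ' ≤ ψ 1 - ψ 0 := by
  have hslope : ∀ t ∈ Ioc (0 : ℝ) 1, t⁻¹ • (φ (0 + t) - φ 0) ≤ ψ 1 - ψ 0 := by
    intro t ⟨ht0, ht1⟩
    calc t⁻¹ • (φ (0 + t) - φ 0) ≤ slope ψ 0 t := by
          rw [slope_def_field, zero_add, sub_zero, smul_eq_mul, inv_mul_eq_div, h0]
          gcongr
          exact hle t ⟨ht0.le, ht1⟩
      _ ≤ slope ψ 0 1 :=
          hψ.slope_mono (left_mem_Icc.2 zero_le_one) ⟨⟨ht0.le, ht1⟩, ht0.ne'⟩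
            ⟨right_mem_Icc.2 zero_le_one, one_ne_zero⟩ ht1
      _ = ψ 1 - ψ 0 := by simp [slope_def_field]
  exact le_of_tendsto hφ.tendsto_slope_zero_right
    (eventually_of_mem (Ioc_mem_nhdsGT zero_lt_one) hslope)

theorem ConvexOn.add_apply_sub_le_of_hasFDerivAt_minorant {E : Type*} [NormedAddCommGroup E]
    [NormedSpace ℝ E] {s : Set E} {f g : E → ℝ} {f' : E →L[ℝ] ℝ} {x y : E}
    (hg : ConvexOn ℝ s g) (hx : x ∈ s) (hy : y ∈ s) (hfg : ∀ z ∈ s, f z ≤ g z)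
    (hfx : f x = g x) (hf : HasFDerivAt f f' x) :
    g x + f' (y - x) ≤ g y := by
  have hseg : ∀ t ∈ Icc (0 : ℝ) 1, AffineMap.lineMap (k := ℝ) x y t ∈ s := fun t ht =>
    hg.1.lineMap_mem hx hy ht
  have hφ : HasDerivAt (f ∘ AffineMap.lineMap (k := ℝ) x y) (f' (y - x)) 0 := by
    refine HasFDerivAt.comp_hasDerivAt _ ?_ AffineMap.hasDerivAt_lineMap
    simpa using hf
  have hψ : ConvexOn ℝ (Icc 0 1) (g ∘ AffineMap.lineMap (k := ℝ) x y) :=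
    (hg.comp_affineMap (AffineMap.lineMap x y)).subset hseg (convex_Icc 0 1)
  have := hφ.le_sub_of_convexOn_majorant hψ (fun t ht => hfg _ (hseg t ht)) (by simpa using hfx)
  simp only [Function.comp_apply, AffineMap.lineMap_apply_zero, AffineMap.lineMap_apply_one] at this
  linarith

/-- If `f` is `C¹` and `T_q(f) = max {q, f}` is convex, then `∇f` is monotone
on `f⁻¹([q, +∞))`, and `⟨∇f x, x - y⟩ ≥ 0` whenever `f x ≥ q` and `f y < q`. -/
theorem stmt_13 (n : ℕ) (f : EuclideanSpace ℝ (Fin n) → ℝ) (q : ℝ)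
    (hf : ContDiff ℝ 1 f)
    (hconv : ConvexOn ℝ Set.univ (fun x => max q (f x))) :
    (∀ x₁ x₂, q ≤ f x₁ → q ≤ f x₂ →
      0 ≤ ⟪gradient f x₁ - gradient f x₂, x₁ - x₂⟫) ∧
    (∀ x y, q ≤ f x → f y < q → 0 ≤ ⟪gradient f x, x - y⟫) := by
  have support : ∀ x y, q ≤ f x → f x + ⟪gradient f x, y - x⟫ ≤ max q (f y) := by
    intro x y hx
    have hfx : HasFDerivAt f (InnerProductSpace.toDual ℝ _ (gradient f x)) x :=
      ((hf.differentiable one_ne_zero) x).hasGradientAt.hasFDerivAt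
    simpa [max_eq_right hx] using hconv.add_apply_sub_le_of_hasFDerivAt_minorant (mem_univ x)
      (mem_univ y) (fun z _ => le_max_right q (f z)) (max_eq_right hx).symm hfx
  constructor
  · intro x₁ x₂ h₁ h₂
    have h₁₂ := support x₁ x₂ h₁
    have h₂₁ := support x₂ x₁ h₂
    rw [max_eq_right h₂] at h₁₂
    rw [max_eq_right h₁] at h₂₁
    rw [← neg_sub x₁ x₂, inner_neg_right] at h₁₂
    rw [inner_sub_left]
    linarith
  · intro x y hx hy
    have h := support x y hx
    rw [max_eq_left hy.le, ← neg_sub x y, inner_neg_right] at h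
    linarith
end

section
/- Let f : ℝⁿ → ℝ be C²-smooth and q ∈ ℝ such that T_q(f) is convex, q is a regular value of f, and H_f(x) is positive definite for all x with f(x) > q. Then the restriction of ∇f to the open set f⁻¹((q, +∞)) is injective. -/
/-!
If `∇f a = ∇f b` for two points `a ≠ b` of `{f > q}`, the convex function
`ψ t = max q (f (a + t (b - a)))` has the same derivative at `t = 0` and `t = 1`, so it is affine
on `[0, 1]`. Being affine with `ψ 0, ψ 1 > q`, it stays above `q`, so it agrees with `f` along the
whole segment; hence the second derivative of `f` in the direction `b - a` vanishes at an
interior point of the segment, contradicting positive definiteness of the Hessian there.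
-/

open Set Filter Topology AffineMap

theorem ConvexOn.eq_add_mul_of_hasDerivAt {s : Set ℝ} {φ : ℝ → ℝ} {x y L : ℝ}
    (hφ : ConvexOn ℝ s φ) (hx : x ∈ s) (hy : y ∈ s)
    (hdx : HasDerivAt φ L x) (hdy : HasDerivAt φ L y) :
    ∀ t ∈ Icc x y, φ t = φ x + (t - x) * L := by
  rintro t ⟨hxt, hty⟩
  rcases hxt.eq_or_lt with rfl | hxt
  · simp
  have ht : t ∈ s := hφ.1.ordConnected.out hx hy ⟨hxt.le, hty⟩
  have hxy : x < y := hxt.trans_le hty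
  have hslope : slope φ x t = L :=
    le_antisymm
      (calc slope φ x t ≤ slope φ x y := by
              simpa only [slope_def_field] using
                hφ.secant_mono hx ht hy hxt.ne' hxy.ne' hty
        _ ≤ L := hφ.slope_le_of_hasDerivAt hx hy hxy hdy)
      (hφ.le_slope_of_hasDerivAt hx ht hxt hdx)
  rw [slope_def_field, div_eq_iff (sub_ne_zero.2 hxt.ne')] at hslope
  linarith

theorem HasDerivAt.const_max_of_lt {g : ℝ → ℝ} {g' q t : ℝ} (hg : HasDerivAt g g' t)
    (hq : q < g t) : HasDerivAt (fun s => max q (g s)) g' t :=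
  hg.congr_of_eventuallyEq <| by
    filter_upwards [hg.continuousAt.eventually (lt_mem_nhds hq)] with s hs
    exact max_eq_right hs.le

theorem Differentiable.hasDerivAt_comp_lineMap {E F : Type*} [NormedAddCommGroup E]
    [NormedSpace ℝ E] [NormedAddCommGroup F] [NormedSpace ℝ F] {f : E → F}
    (hf : Differentiable ℝ f) (a b : E) (t : ℝ) :
    HasDerivAt (fun s => f (lineMap a b s)) (fderiv ℝ f (lineMap a b t) (b - a)) t :=
  (hf _).hasFDerivAt.comp_hasDerivAt t hasDerivAt_lineMap

theorem fderiv_fderiv_apply_eq_zero_of_eventually_lineMap {E : Type*} [NormedAddCommGroup E]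
    [NormedSpace ℝ E] {f : E → ℝ} (hf : ContDiff ℝ 2 f) {a b : E} {t₀ α β : ℝ}
    (haff : ∀ᶠ t in 𝓝 t₀, f (lineMap a b t) = α + t * β) :
    fderiv ℝ (fderiv ℝ f) (lineMap a b t₀) (b - a) (b - a) = 0 := by
  have hdf := (hf.differentiable two_ne_zero).hasDerivAt_comp_lineMap a b
  have hslope : ∀ᶠ t in 𝓝 t₀, fderiv ℝ f (lineMap a b t) (b - a) = β := by
    filter_upwards [haff.eventually_nhds] with t ht
    exact (hdf t).unique <| ((hasDerivAt_id t).mul_const β).const_add α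
      |>.congr_of_eventuallyEq ht |>.congr_deriv (by simp)
  have hdd : HasDerivAt (fun t => fderiv ℝ f (lineMap a b t) (b - a))
      (fderiv ℝ (fderiv ℝ f) (lineMap a b t₀) (b - a) (b - a)) t₀ := by
    have hG : Differentiable ℝ (fderiv ℝ f) :=
      (hf.fderiv_right (m := 1) (by norm_num)).differentiable one_ne_zero
    simpa using ((hG _).hasFDerivAt.comp_hasDerivAt t₀ hasDerivAt_lineMap).clm_apply
      (hasDerivAt_const t₀ (b - a))
  exact hdd.unique ((hasDerivAt_const t₀ β).congr_of_eventuallyEq hslope)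

theorem stmt_14_general (n : ℕ) (f : EuclideanSpace ℝ (Fin n) → ℝ) (q : ℝ)
    (hf : ContDiff ℝ 2 f)
    (hconv : ConvexOn ℝ Set.univ (fun x => max q (f x)))
    (hhess : ∀ x, q < f x → ∀ v : EuclideanSpace ℝ (Fin n), v ≠ 0 →
      0 < fderiv ℝ (fderiv ℝ f) x v v) :
    Set.InjOn (gradient f) {x | q < f x} := by
  intro a (ha : q < f a) b (hb : q < f b) hab
  by_contra hne
  have hD : fderiv ℝ f a = fderiv ℝ f b := (InnerProductSpace.toDual ℝ _).symm.injective hab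
  set L := fderiv ℝ f a (b - a)
  have hψ : ConvexOn ℝ univ fun t => max q (f (lineMap a b t)) :=
    hconv.comp_affineMap (lineMap a b)
  have hd := (hf.differentiable two_ne_zero).hasDerivAt_comp_lineMap a b
  have h0 := (hd 0).const_max_of_lt (q := q) (by simpa using ha)
  have h1 := (hd 1).const_max_of_lt (q := q) (by simpa using hb)
  simp only [lineMap_apply_zero, lineMap_apply_one, ← hD] at h0 h1
  have haff := hψ.eq_add_mul_of_hasDerivAt (mem_univ 0) (mem_univ 1) h0 h1
  have hfb : f b = f a + L := by
    simpa only [lineMap_apply_zero, lineMap_apply_one, max_eq_right ha.le, max_eq_right hb.le,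
      sub_zero, one_mul] using haff 1 (right_mem_Icc.2 zero_le_one)
  have hline : ∀ t ∈ Ioo (0 : ℝ) 1, f (lineMap a b t) = f a + t * L := by
    intro t ht
    have hψt := haff t (Ioo_subset_Icc_self ht)
    simp only [lineMap_apply_zero, max_eq_right ha.le, sub_zero] at hψt
    -- `f a + t * L = (1 - t) * f a + t * f b`, a convex combination of values above `q`
    have hq : q < max q (f (lineMap a b t)) := by nlinarith [ht.1, ht.2]
    rwa [max_eq_right (lt_max_iff.1 hq |>.resolve_left (lt_irrefl q)).le] at hψt
  have hmid : (1 / 2 : ℝ) ∈ Ioo (0 : ℝ) 1 := by norm_num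
  have hzero := fderiv_fderiv_apply_eq_zero_of_eventually_lineMap hf
    (eventually_of_mem (Ioo_mem_nhds hmid.1 hmid.2) hline)
  have hpos := hhess _ (by rw [hline _ hmid]; linarith) (b - a) (sub_ne_zero.2 (Ne.symm hne))
  exact hpos.ne' hzero

/-- If `f : ℝⁿ → ℝ` is `C²`, `T_q(f)` is convex, `q` is a regular value of `f`,
and the Hessian of `f` is positive definite at every point `x` with `f x > q`,
then `∇f` is injective on `f⁻¹((q, +∞))`. -/
theorem stmt_14 (n : ℕ) (f : EuclideanSpace ℝ (Fin n) → ℝ) (q : ℝ)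
    (hf : ContDiff ℝ 2 f)
    (hconv : ConvexOn ℝ Set.univ (fun x => max q (f x)))
    (hreg : ∀ x, f x = q → gradient f x ≠ 0)
    (hhess : ∀ x, q < f x → ∀ v : EuclideanSpace ℝ (Fin n), v ≠ 0 →
      0 < fderiv ℝ (fderiv ℝ f) x v v) :
    Set.InjOn (gradient f) {x | q < f x} :=
  stmt_14_general n f q hf hconv hhess
end

section
/- For a > 0, the set Hess⁺(f_a) of points where the Hessian of f_a(x, y) = (x² + y²)² − 2a²(x² − y²) is positive definite equals {(x, y) ∈ ℝ² : 3(x² + y²)² + 2a²(x² − y²) > a⁴}. -/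
/-!
The Hessian of `f_a` is the symmetric matrix `[[A, B], [B, C]]` with
`A = 12x² + 4y² − 4a²`, `B = 8xy`, `C = 4x² + 12y² + 4a²`. By Sylvester's criterion it is
positive definite iff `A > 0` and `AC − B² > 0`; since `C ≥ 0`, the second condition already
forces the first, and `AC − B² = 16 (3(x² + y²)² + 2a²(x² − y²) − a⁴)`.
-/

open ContinuousLinearMap

theorem binary_quadratic_form_pos_iff (A B C : ℝ) :
    (∀ v : ℝ × ℝ, v ≠ 0 → 0 < A * v.1 ^ 2 + 2 * B * v.1 * v.2 + C * v.2 ^ 2) ↔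
      0 < A ∧ B ^ 2 < A * C := by
  constructor
  · intro h
    have hA : 0 < A := by simpa using h (1, 0) (by simp)
    have hdet := h (B, -A) (by simp [hA.ne'])
    exact ⟨hA, by nlinarith⟩
  · rintro ⟨hA, hdet⟩ ⟨v₁, v₂⟩ hv
    -- Completing the square: `A · Q(v) = (A v₁ + B v₂)² + (AC − B²) v₂²`.
    rcases eq_or_ne v₂ 0 with rfl | hv₂
    · have hv₁ : v₁ ≠ 0 := fun h => hv (by simp [h])
      have : 0 < v₁ ^ 2 := by positivity
      simpa using mul_pos hA this
    · have : 0 < v₂ ^ 2 := by positivity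
      nlinarith [mul_pos (sub_pos.2 hdet) this, sq_nonneg (A * v₁ + B * v₂)]

namespace Lemniscate

variable (a : ℝ)

-- Its zero set is the lemniscate of Bernoulli with foci `(±a, 0)`.
def f (p : ℝ × ℝ) : ℝ := (p.1 ^ 2 + p.2 ^ 2) ^ 2 - 2 * a ^ 2 * (p.1 ^ 2 - p.2 ^ 2)

def partialX (p : ℝ × ℝ) : ℝ := 4 * p.1 * (p.1 ^ 2 + p.2 ^ 2) - 4 * a ^ 2 * p.1

def partialY (p : ℝ × ℝ) : ℝ := 4 * p.2 * (p.1 ^ 2 + p.2 ^ 2) + 4 * a ^ 2 * p.2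

noncomputable def grad (p : ℝ × ℝ) : ℝ × ℝ →L[ℝ] ℝ :=
  partialX a p • fst ℝ ℝ ℝ + partialY a p • snd ℝ ℝ ℝ

variable (p : ℝ × ℝ)

theorem hasFDerivAt_f : HasFDerivAt (f a) (grad a p) p := by
  have hx : HasFDerivAt (fun q : ℝ × ℝ => q.1) (fst ℝ ℝ ℝ) p := hasFDerivAt_fst
  have hy : HasFDerivAt (fun q : ℝ × ℝ => q.2) (snd ℝ ℝ ℝ) p := hasFDerivAt_snd
  refine (((hx.pow 2).add (hy.pow 2)).pow 2 |>.sub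
    (((hx.pow 2).sub (hy.pow 2)).const_mul (2 * a ^ 2))).congr_fderiv ?_
  ext <;> simp [grad, partialX, partialY] <;> ring

theorem hasFDerivAt_partialX :
    HasFDerivAt (partialX a)
      ((12 * p.1 ^ 2 + 4 * p.2 ^ 2 - 4 * a ^ 2) • fst ℝ ℝ ℝ +
        (8 * p.1 * p.2) • snd ℝ ℝ ℝ) p := by
  have hx : HasFDerivAt (fun q : ℝ × ℝ => q.1) (fst ℝ ℝ ℝ) p := hasFDerivAt_fst
  have hy : HasFDerivAt (fun q : ℝ × ℝ => q.2) (snd ℝ ℝ ℝ) p := hasFDerivAt_snd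
  refine (((hx.const_mul 4).mul ((hx.pow 2).add (hy.pow 2))).sub
    (hx.const_mul (4 * a ^ 2))).congr_fderiv ?_
  ext <;> simp <;> ring

theorem hasFDerivAt_partialY :
    HasFDerivAt (partialY a)
      ((8 * p.1 * p.2) • fst ℝ ℝ ℝ +
        (4 * p.1 ^ 2 + 12 * p.2 ^ 2 + 4 * a ^ 2) • snd ℝ ℝ ℝ) p := by
  have hx : HasFDerivAt (fun q : ℝ × ℝ => q.1) (fst ℝ ℝ ℝ) p := hasFDerivAt_fst
  have hy : HasFDerivAt (fun q : ℝ × ℝ => q.2) (snd ℝ ℝ ℝ) p := hasFDerivAt_snd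
  refine (((hy.const_mul 4).mul ((hx.pow 2).add (hy.pow 2))).add
    (hy.const_mul (4 * a ^ 2))).congr_fderiv ?_
  ext <;> simp <;> ring

theorem fderiv_fderiv_f_apply (v : ℝ × ℝ) :
    fderiv ℝ (fderiv ℝ (f a)) p v v =
      (12 * p.1 ^ 2 + 4 * p.2 ^ 2 - 4 * a ^ 2) * v.1 ^ 2 + 2 * (8 * p.1 * p.2) * v.1 * v.2 +
        (4 * p.1 ^ 2 + 12 * p.2 ^ 2 + 4 * a ^ 2) * v.2 ^ 2 := by
  have hgrad : fderiv ℝ (f a) = grad a := funext fun q => (hasFDerivAt_f a q).fderiv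
  have hhess : HasFDerivAt (grad a) _ p :=
    ((hasFDerivAt_partialX a p).smul_const (fst ℝ ℝ ℝ)).add
      ((hasFDerivAt_partialY a p).smul_const (snd ℝ ℝ ℝ))
  rw [hgrad, hhess.fderiv]
  simp only [add_apply, smulRight_apply, smul_apply, coe_fst', smul_eq_mul, coe_snd']
  ring

end Lemniscate

theorem stmt_17_general (a : ℝ)
    (f : ℝ × ℝ → ℝ)
    (hf : f = fun p => (p.1 ^ 2 + p.2 ^ 2) ^ 2 - 2 * a ^ 2 * (p.1 ^ 2 - p.2 ^ 2)) :
    {p : ℝ × ℝ | ∀ v : ℝ × ℝ, v ≠ 0 → 0 < fderiv ℝ (fderiv ℝ f) p v v} =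
      {p : ℝ × ℝ |
        a ^ 4 < 3 * (p.1 ^ 2 + p.2 ^ 2) ^ 2 + 2 * a ^ 2 * (p.1 ^ 2 - p.2 ^ 2)} := by
  obtain rfl : f = Lemniscate.f a := hf
  ext ⟨x, y⟩
  simp only [Set.mem_ofPred_eq]
  simp_rw [Lemniscate.fderiv_fderiv_f_apply, binary_quadratic_form_pos_iff]
  have hdet : (12 * x ^ 2 + 4 * y ^ 2 - 4 * a ^ 2) * (4 * x ^ 2 + 12 * y ^ 2 + 4 * a ^ 2) -
      (8 * x * y) ^ 2 = 16 * (3 * (x ^ 2 + y ^ 2) ^ 2 + 2 * a ^ 2 * (x ^ 2 - y ^ 2) - a ^ 4) := by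
    ring
  have hC : 0 ≤ 4 * x ^ 2 + 12 * y ^ 2 + 4 * a ^ 2 := by positivity
  constructor
  · rintro ⟨-, h⟩
    linarith
  · intro h
    refine ⟨?_, by linarith⟩
    nlinarith [sq_nonneg (8 * x * y)]

/-- For `a > 0`, the set of points where the Hessian of
`f_a(x,y) = (x²+y²)² − 2a²(x²−y²)` is positive definite equals
`{(x,y) : 3(x²+y²)² + 2a²(x²−y²) > a⁴}`. -/
theorem stmt_17 (a : ℝ) (ha : 0 < a)
    (f : ℝ × ℝ → ℝ)
    (hf : f = fun p => (p.1 ^ 2 + p.2 ^ 2) ^ 2 - 2 * a ^ 2 * (p.1 ^ 2 - p.2 ^ 2)) :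
    {p : ℝ × ℝ | ∀ v : ℝ × ℝ, v ≠ 0 → 0 < fderiv ℝ (fderiv ℝ f) p v v} =
      {p : ℝ × ℝ |
        a ^ 4 < 3 * (p.1 ^ 2 + p.2 ^ 2) ^ 2 + 2 * a ^ 2 * (p.1 ^ 2 - p.2 ^ 2)} :=
  stmt_17_general a f hf
end

section
/- For a > 0 and any c ∈ [−a⁴, 3a⁴), the two distinct points (±√(3a⁴−c)/(2a), √(c+a⁴)/(2a)) lie on the level set f_a⁻¹(c) and have the same gradient: ∇f_a at both points equals 4a·(0, √(c + a⁴)). Hence the gradient ∇f_a is not injective on the overlevel set f_a⁻¹((k, +∞)) for any k ∈ [−a⁴, 3a⁴). -/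
/-!
On the circle `x² + y² = a²` the `x`-component `4x(x² + y² − a²)` of `∇f_a` vanishes, and there
`f_a = 4a²y² − a⁴` and `∇f_a = (0, 8a²y)` depend on `y` alone. So the mirror images `(±x, y)` on
this circle with `4a²y² = c + a⁴` lie on `f_a⁻¹(c)` and share their gradient; they are distinct as
soon as `c < 3a⁴`, and taking `k < c < 3a⁴` puts such a pair in `{f_a > k}`.
-/

open Real

theorem sqrt_div_pos {a c : ℝ} (ha : 0 < a) (hc : c < 3 * a ^ 4) :
    0 < √(3 * a ^ 4 - c) / (2 * a) :=
  div_pos (sqrt_pos.mpr (by linarith)) (by positivity)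

theorem sq_sqrt_div_add_sq_sqrt_div {a c : ℝ} (ha : a ≠ 0) (hc₁ : -a ^ 4 ≤ c)
    (hc₂ : c ≤ 3 * a ^ 4) :
    (√(3 * a ^ 4 - c) / (2 * a)) ^ 2 + (√(c + a ^ 4) / (2 * a)) ^ 2 = a ^ 2 := by
  rw [div_pow, div_pow, sq_sqrt (by linarith), sq_sqrt (by linarith)]
  field_simp
  ring

def lemniscateFn (a : ℝ) (p : ℝ × ℝ) : ℝ :=
  (p.1 ^ 2 + p.2 ^ 2) ^ 2 - 2 * a ^ 2 * (p.1 ^ 2 - p.2 ^ 2)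

namespace lemniscateFn

variable (a : ℝ)

theorem hasFDerivAt (p : ℝ × ℝ) :
    HasFDerivAt (lemniscateFn a)
      ((4 * p.1 * (p.1 ^ 2 + p.2 ^ 2 - a ^ 2)) • ContinuousLinearMap.fst ℝ ℝ ℝ +
        (4 * p.2 * (p.1 ^ 2 + p.2 ^ 2 + a ^ 2)) • ContinuousLinearMap.snd ℝ ℝ ℝ) p := by
  have hx := (hasFDerivAt_fst (𝕜 := ℝ) (p := p)).pow 2
  have hy := (hasFDerivAt_snd (𝕜 := ℝ) (p := p)).pow 2
  refine (((hx.add hy).pow 2).sub ((hx.sub hy).const_mul (2 * a ^ 2))).congr_fderiv ?_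
  ext <;> simp <;> ring

theorem fderiv_apply (p v : ℝ × ℝ) :
    fderiv ℝ (lemniscateFn a) p v =
      4 * p.1 * (p.1 ^ 2 + p.2 ^ 2 - a ^ 2) * v.1 +
        4 * p.2 * (p.1 ^ 2 + p.2 ^ 2 + a ^ 2) * v.2 := by
  simp [(hasFDerivAt a p).fderiv, mul_assoc]

variable {a} {x y : ℝ}

theorem apply_of_sq_add_sq (h : x ^ 2 + y ^ 2 = a ^ 2) :
    lemniscateFn a (x, y) = 4 * a ^ 2 * y ^ 2 - a ^ 4 := by
  unfold lemniscateFn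
  linear_combination (x ^ 2 + y ^ 2 - a ^ 2) * h

theorem fderiv_apply_of_sq_add_sq (h : x ^ 2 + y ^ 2 = a ^ 2) (v : ℝ × ℝ) :
    fderiv ℝ (lemniscateFn a) (x, y) v = 8 * a ^ 2 * y * v.2 := by
  rw [fderiv_apply]
  dsimp only
  rw [h]
  ring

variable {c : ℝ}

theorem apply_eq_of_sq_add_sq (ha : a ≠ 0) (hc : -a ^ 4 ≤ c)
    (h : x ^ 2 + (√(c + a ^ 4) / (2 * a)) ^ 2 = a ^ 2) :
    lemniscateFn a (x, √(c + a ^ 4) / (2 * a)) = c := by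
  rw [apply_of_sq_add_sq h, div_pow, sq_sqrt (by linarith)]
  field_simp
  ring

theorem fderiv_apply_eq_of_sq_add_sq (ha : a ≠ 0)
    (h : x ^ 2 + (√(c + a ^ 4) / (2 * a)) ^ 2 = a ^ 2) (v : ℝ × ℝ) :
    fderiv ℝ (lemniscateFn a) (x, √(c + a ^ 4) / (2 * a)) v = 4 * a * √(c + a ^ 4) * v.2 := by
  rw [fderiv_apply_of_sq_add_sq h]
  field_simp
  ring

theorem mirror_points (ha : 0 < a) (hc : c ∈ Set.Ico (-a ^ 4) (3 * a ^ 4)) :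
    let p₁ : ℝ × ℝ := (√(3 * a ^ 4 - c) / (2 * a), √(c + a ^ 4) / (2 * a))
    let p₂ : ℝ × ℝ := (-(√(3 * a ^ 4 - c) / (2 * a)), √(c + a ^ 4) / (2 * a))
    lemniscateFn a p₁ = c ∧ lemniscateFn a p₂ = c ∧
      (∀ v, fderiv ℝ (lemniscateFn a) p₁ v = 4 * a * √(c + a ^ 4) * v.2) ∧
      (∀ v, fderiv ℝ (lemniscateFn a) p₂ v = 4 * a * √(c + a ^ 4) * v.2) ∧ p₁ ≠ p₂ := by
  obtain ⟨hc₁, hc₂⟩ := hc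
  have h₁ := sq_sqrt_div_add_sq_sqrt_div ha.ne' hc₁ hc₂.le
  have h₂ := (neg_sq (√(3 * a ^ 4 - c) / (2 * a))).symm ▸ h₁
  exact ⟨apply_eq_of_sq_add_sq ha.ne' hc₁ h₁, apply_eq_of_sq_add_sq ha.ne' hc₁ h₂,
    fderiv_apply_eq_of_sq_add_sq ha.ne' h₁, fderiv_apply_eq_of_sq_add_sq ha.ne' h₂,
    fun h ↦ by linarith [congrArg Prod.fst h, sqrt_div_pos ha hc₂]⟩

end lemniscateFn

/-- For `a > 0` and `c ∈ [−a⁴, 3a⁴)`, the points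
`(±√(3a⁴−c)/(2a), √(c+a⁴)/(2a))` lie on the level set `f_a⁻¹(c)` and have the
same gradient `4a·(0, √(c+a⁴))` (distinct points when `c > −a⁴`); hence `∇f_a`
is not injective on `f_a⁻¹((k, +∞))` for any `k ∈ [−a⁴, 3a⁴)`. -/
theorem stmt_18 (a : ℝ) (ha : 0 < a)
    (f : ℝ × ℝ → ℝ)
    (hf : f = fun p => (p.1 ^ 2 + p.2 ^ 2) ^ 2 - 2 * a ^ 2 * (p.1 ^ 2 - p.2 ^ 2)) :
    (∀ c ∈ Set.Ico (-a ^ 4) (3 * a ^ 4),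
      let p₁ : ℝ × ℝ :=
        (Real.sqrt (3 * a ^ 4 - c) / (2 * a), Real.sqrt (c + a ^ 4) / (2 * a))
      let p₂ : ℝ × ℝ :=
        (-(Real.sqrt (3 * a ^ 4 - c) / (2 * a)), Real.sqrt (c + a ^ 4) / (2 * a))
      f p₁ = c ∧ f p₂ = c ∧
      (∀ v : ℝ × ℝ, fderiv ℝ f p₁ v = 4 * a * Real.sqrt (c + a ^ 4) * v.2) ∧
      (∀ v : ℝ × ℝ, fderiv ℝ f p₂ v = 4 * a * Real.sqrt (c + a ^ 4) * v.2) ∧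
      (-a ^ 4 < c → p₁ ≠ p₂)) ∧
    (∀ k ∈ Set.Ico (-a ^ 4) (3 * a ^ 4),
      ¬ Set.InjOn (fun p => fderiv ℝ f p) {p : ℝ × ℝ | k < f p}) := by
  obtain rfl : f = lemniscateFn a := hf
  refine ⟨fun c hc ↦ ?_, fun k ⟨hk₁, hk₂⟩ hinj ↦ ?_⟩
  · obtain ⟨h₁, h₂, d₁, d₂, hne⟩ := lemniscateFn.mirror_points ha hc
    exact ⟨h₁, h₂, d₁, d₂, fun _ ↦ hne⟩
  · obtain ⟨c, hkc, hc₂⟩ := exists_between hk₂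
    obtain ⟨h₁, h₂, d₁, d₂, hne⟩ := lemniscateFn.mirror_points ha ⟨hk₁.trans hkc.le, hc₂⟩
    exact hne (hinj (hkc.trans_eq h₁.symm) (hkc.trans_eq h₂.symm)
      (ContinuousLinearMap.ext fun v ↦ (d₁ v).trans (d₂ v).symm))
end
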